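/- arXiv:2212.14531 — 3 statements merged into one kernel-verified Lean document; each statement's English description precedes it below -/
import Mathlib

section
/- Let $X = (X_1,\dots,X_n)$ be a vector of independent random variables taking values in a set $\mathcal{X}$, let $X'$ be an independent copy of $X$, and let $f:\mathcal{X}^n\to\mathbb{R}$ be measurable with $f(X)$ square-integrable. For $A\subseteq[n]$ let $X^A$ denote the vector obtained from $X$ by replacing the coordinates indexed by $A$ with the corresponding coordinates of $X'$, and write $X^{(i)}=X^{\{i\}}$ and $X^{[i]}=X^{\{1,\dots,i\}}$. Then $\mathrm{Var}(f(X)) = \tfrac{1}{2}\sum_{i=1}^n \mathbb{E}\big[(f(X)-f(X^{(i)}))(f(X^{[i-1]})-f(X^{[i]}))\big]$. -/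
/-!
Store `(X, X')` as one vector indexed by `ι ⊕ ι`, with product law. Exchanging the two copies on
a set `B` of coordinates preserves this law and turns `X^A` into `X^(A ∆ B)`.
Since `X` and `X'` are independent, `Var f(X) = E[f(X) (f(X) - f(X^[n]))]`, and the difference
telescopes into `∑ᵢ (f(X^[i-1]) - f(X^[i]))`. Exchanging coordinate `i` maps `f(X)` to `f(X^(i))`
and swaps `f(X^[i-1])` with `f(X^[i])`, so `E[f(X^(i)) (f(X^[i-1]) - f(X^[i]))]` is the negative
of `E[f(X) (f(X^[i-1]) - f(X^[i]))]`; each summand is therefore half of the resampling term.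
-/

open MeasureTheory ProbabilityTheory Finset

theorem MeasureTheory.measurePreserving_comp_perm {ι 𝒳 : Type*} [Fintype ι] [MeasurableSpace 𝒳]
    (ν : ι → Measure 𝒳) [∀ i, SigmaFinite (ν i)] (σ : Equiv.Perm ι) (hσ : ∀ i, ν (σ i) = ν i) :
    MeasurePreserving (fun x : ι → 𝒳 => x ∘ σ) (Measure.pi ν) (Measure.pi ν) := by
  convert measurePreserving_arrowCongr' (μ := ν) (ν := ν) σ.symm (.refl 𝒳)
    fun i => by rw [← hσ (σ.symm i), σ.apply_symm_apply]; exact .id _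
  rfl

instance MeasureTheory.isProbabilityMeasure_sumElim {ι ι' α : Type*} [MeasurableSpace α]
    (μ : ι → Measure α) (ν : ι' → Measure α) [∀ i, IsProbabilityMeasure (μ i)]
    [∀ i, IsProbabilityMeasure (ν i)] (k : ι ⊕ ι') : IsProbabilityMeasure (Sum.elim μ ν k) := by
  cases k <;> dsimp only [Sum.elim_inl, Sum.elim_inr] <;> infer_instance

/-- The symmetrization step for an exchangeable pair `(x, T x)`. -/
theorem MeasureTheory.integral_sub_mul_sub_eq_two_mul {α : Type*} [MeasurableSpace α]
    {P : Measure α} {T : α → α} (hT : MeasurePreserving T P P) (hT_inv : Function.Involutive T)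
    {a b c d : α → ℝ} (hab : ∀ x, a (T x) = b x) (hcd : ∀ x, c (T x) = d x)
    (ha : Integrable (fun x => a x * (c x - d x)) P)
    (hb : Integrable (fun x => b x * (c x - d x)) P) :
    ∫ x, (a x - b x) * (c x - d x) ∂P = 2 * ∫ x, a x * (c x - d x) ∂P := by
  have hba (x : α) : b (T x) = a x := by rw [← hab, hT_inv]
  have hdc (x : α) : d (T x) = c x := by rw [← hcd, hT_inv]
  have hT_emb := (MeasurableEquiv.ofInvolutive T hT_inv hT.measurable).measurableEmbedding
  have hb_eq : ∫ x, b x * (c x - d x) ∂P = -∫ x, a x * (c x - d x) ∂P := by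
    rw [← hT.integral_comp hT_emb, ← integral_neg]
    simp only [hba, hcd, hdc]
    congr 1 with x
    ring
  simp_rw [sub_mul (a _) (b _)]
  rw [integral_sub ha hb, hb_eq]
  ring

theorem Fin.sum_apply_Iio_sub_apply_Iic {M : Type*} [AddCommGroup M] {n : ℕ}
    (g : Finset (Fin n) → M) : ∑ i, (g (Iio i) - g (Iic i)) = g ∅ - g univ := by
  let c : ℕ → M := fun k => g (univ.filter fun j : Fin n => (j : ℕ) < k)
  have hIio (i : Fin n) : Iio i = univ.filter fun j : Fin n => (j : ℕ) < i := by
    ext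
    simp
  have hIic (i : Fin n) : Iic i = univ.filter fun j : Fin n => (j : ℕ) < i + 1 := by
    ext
    simp only [mem_Iic, mem_filter, mem_univ, true_and]
    omega
  calc ∑ i : Fin n, (g (Iio i) - g (Iic i)) = ∑ k ∈ range n, (c k - c (k + 1)) := by
        rw [← Fin.sum_univ_eq_sum_range (fun k => c k - c (k + 1))]
        simp only [c, hIio, hIic]
    _ = g ∅ - g univ := by
        rw [sum_range_sub']
        simp only [c]
        congr 2 <;> ext j <;> simp

theorem Finset.Iio_symmDiff_singleton {α : Type*} [LinearOrder α] [LocallyFiniteOrderBot α]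
    (a : α) : symmDiff (Iio a) {a} = Iic a := by
  rw [(disjoint_singleton_right.2 notMem_Iio_self).symmDiff_eq_sup, sup_eq_union, union_comm,
    ← insert_eq, Iio_insert]

section Resample

variable {ι 𝒳 : Type*} [DecidableEq ι]

def swapOn (A : Finset ι) : Equiv.Perm (ι ⊕ ι) :=
  Function.Involutive.toPerm
    (Sum.elim (fun j => if j ∈ A then .inr j else .inl j)
      (fun j => if j ∈ A then .inl j else .inr j))
    (by rintro (j | j) <;> by_cases hj : j ∈ A <;> simp [hj])

@[simp]
theorem swapOn_inl (A : Finset ι) (j : ι) :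
    swapOn A (.inl j) = if j ∈ A then .inr j else .inl j := rfl

@[simp]
theorem swapOn_inr (A : Finset ι) (j : ι) :
    swapOn A (.inr j) = if j ∈ A then .inl j else .inr j := rfl

/-- With `x ∘ Sum.inl = X` and `x ∘ Sum.inr = X'`, `resample A x` is the vector `X^A`. -/
def resample (A : Finset ι) (x : ι ⊕ ι → 𝒳) : ι → 𝒳 :=
  fun j => x (if j ∈ A then .inr j else .inl j)

@[simp]
theorem resample_empty (x : ι ⊕ ι → 𝒳) : resample ∅ x = x ∘ Sum.inl := by
  ext
  simp [resample]

@[simp]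
theorem resample_univ [Fintype ι] (x : ι ⊕ ι → 𝒳) : resample univ x = x ∘ Sum.inr := by
  ext
  simp [resample]

@[fun_prop]
theorem measurable_resample [MeasurableSpace 𝒳] (A : Finset ι) :
    Measurable (resample A : (ι ⊕ ι → 𝒳) → ι → 𝒳) :=
  measurable_pi_lambda _ fun _ => measurable_pi_apply _

theorem comp_swapOn_involutive (A : Finset ι) :
    Function.Involutive fun x : ι ⊕ ι → 𝒳 => x ∘ swapOn A := fun x => by
  ext (j | j) <;> by_cases hj : j ∈ A <;> simp [hj]

theorem resample_comp_swapOn (A B : Finset ι) (x : ι ⊕ ι → 𝒳) :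
    resample A (x ∘ swapOn B) = resample (symmDiff A B) x := by
  ext j
  by_cases hA : j ∈ A <;> by_cases hB : j ∈ B <;> simp [resample, mem_symmDiff, hA, hB]

theorem resample_empty_comp_swapOn (A : Finset ι) (x : ι ⊕ ι → 𝒳) :
    resample ∅ (x ∘ swapOn A) = resample A x := by
  rw [resample_comp_swapOn, ← bot_eq_empty, bot_symmDiff]

variable [Fintype ι] [MeasurableSpace 𝒳] (ν : ι → Measure 𝒳) [∀ i, IsProbabilityMeasure (ν i)]

theorem measurePreserving_comp_swapOn (A : Finset ι) :
    MeasurePreserving (fun x : ι ⊕ ι → 𝒳 => x ∘ swapOn A)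
      (Measure.pi (Sum.elim ν ν)) (Measure.pi (Sum.elim ν ν)) :=
  measurePreserving_comp_perm _ _ fun k => by
    rcases k with j | j <;> by_cases hj : j ∈ A <;> simp [hj]

theorem integral_resample_empty_mul_resample_univ (f : (ι → 𝒳) → ℝ) :
    ∫ x, f (resample ∅ x) * f (resample univ x) ∂Measure.pi (Sum.elim ν ν)
      = (∫ x, f (resample ∅ x) ∂Measure.pi (Sum.elim ν ν)) ^ 2 := by
  have hE := measurePreserving_sumPiEquivProdPi (Sum.elim ν ν)
  have hmean : ∫ x, f (resample ∅ x) ∂Measure.pi (Sum.elim ν ν) = ∫ y, f y ∂Measure.pi ν := by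
    simp only [resample_empty]
    exact (hE.integral_comp' fun z => f z.1).trans (by simp [integral_fun_fst])
  rw [hmean, sq, ← integral_prod_mul]
  simp only [resample_empty, resample_univ]
  exact hE.integral_comp' fun z => f z.1 * f z.2

theorem variance_eq_half_sum_integral_resample {n : ℕ} (ν : Fin n → Measure 𝒳)
    [∀ i, IsProbabilityMeasure (ν i)] {f : (Fin n → 𝒳) → ℝ}
    (hf : MemLp (fun x => f (resample ∅ x)) 2 (Measure.pi (Sum.elim ν ν))) :
    variance (fun x => f (resample ∅ x)) (Measure.pi (Sum.elim ν ν))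
      = 1 / 2 * ∑ i, ∫ x, (f (resample ∅ x) - f (resample {i} x)) *
          (f (resample (Iio i) x) - f (resample (Iic i) x)) ∂Measure.pi (Sum.elim ν ν) := by
  set P := Measure.pi (Sum.elim ν ν)
  have hmem (A : Finset (Fin n)) : MemLp (fun x => f (resample A x)) 2 P := by
    convert hf.comp_measurePreserving (measurePreserving_comp_swapOn ν A) using 1
    ext x
    exact congrArg f (resample_empty_comp_swapOn A x).symm
  have hint (A B C : Finset (Fin n)) :
      Integrable (fun x => f (resample A x) * (f (resample B x) - f (resample C x))) P :=
    (hmem A).integrable_mul ((hmem B).sub (hmem C))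
  have hsymm (i : Fin n) :
      ∫ x, (f (resample ∅ x) - f (resample {i} x)) *
          (f (resample (Iio i) x) - f (resample (Iic i) x)) ∂P
        = 2 * ∫ x, f (resample ∅ x) * (f (resample (Iio i) x) - f (resample (Iic i) x)) ∂P :=
    integral_sub_mul_sub_eq_two_mul (measurePreserving_comp_swapOn ν {i})
      (comp_swapOn_involutive {i})
      (fun x => by rw [resample_empty_comp_swapOn])
      (fun x => by rw [resample_comp_swapOn, Iio_symmDiff_singleton])
      (hint _ _ _) (hint _ _ _)
  calc variance (fun x => f (resample ∅ x)) P
      = ∫ x, f (resample ∅ x) * (f (resample ∅ x) - f (resample univ x)) ∂P := by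
        rw [variance_eq_sub hf, ← integral_resample_empty_mul_resample_univ, ← integral_sub]
        · simp only [Pi.pow_apply, mul_sub, sq]
        · simpa [sq] using (hmem ∅).integrable_mul (hmem ∅)
        · exact (hmem ∅).integrable_mul (hmem univ)
    _ = ∑ i, ∫ x, f (resample ∅ x) * (f (resample (Iio i) x) - f (resample (Iic i) x)) ∂P := by
        rw [← integral_finsetSum _ fun i _ => hint _ _ _]
        congr 1 with x
        rw [← mul_sum, Fin.sum_apply_Iio_sub_apply_Iic fun A => f (resample A x)]
    _ = _ := by
        rw [mul_sum]
        refine sum_congr rfl fun i _ => ?_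
        rw [hsymm]
        ring

end Resample

section IdentDistrib

variable {Ω ι 𝒳 : Type*} [MeasurableSpace Ω] [MeasurableSpace 𝒳] {μ : Measure Ω}
  {X X' : ι → Ω → 𝒳}

theorem ProbabilityTheory.IdentDistrib.aemeasurable_sumElim
    (hid : ∀ i, IdentDistrib (X i) (X' i) μ μ) (k : ι ⊕ ι) : AEMeasurable (Sum.elim X X' k) μ := by
  rcases k with j | j
  exacts [(hid j).aemeasurable_fst, (hid j).aemeasurable_snd]

theorem ProbabilityTheory.iIndepFun.map_sumElim_eq_pi [Fintype ι]
    (hindep : iIndepFun (Sum.elim X X') μ) (hid : ∀ i, IdentDistrib (X i) (X' i) μ μ) :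
    μ.map (fun ω k => Sum.elim X X' k ω)
      = Measure.pi (Sum.elim (fun i => μ.map (X i)) (fun i => μ.map (X i))) := by
  rw [hindep.map_fun_eq_pi_map (IdentDistrib.aemeasurable_sumElim hid)]
  congr 1 with (j | j) : 1
  exacts [rfl, (hid j).map_eq.symm]

end IdentDistrib

theorem stmt_0_general {Ω 𝒳 : Type*} [MeasurableSpace Ω] [MeasurableSpace 𝒳]
    (μ : Measure Ω) [IsProbabilityMeasure μ] (n : ℕ)
    (X X' : Fin n → Ω → 𝒳)
    (hindep : iIndepFun (Sum.elim X X') μ)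
    (hid : ∀ i, IdentDistrib (X i) (X' i) μ μ)
    (f : (Fin n → 𝒳) → ℝ) (hf : Measurable f)
    (hL2 : MemLp (fun ω => f (fun i => X i ω)) 2 μ) :
    variance (fun ω => f (fun i => X i ω)) μ
      = (1 / 2) * ∑ i : Fin n, ∫ ω,
          (f (fun j => X j ω) - f (fun j => if j = i then X' j ω else X j ω)) *
          (f (fun j => if j < i then X' j ω else X j ω) -
           f (fun j => if j ≤ i then X' j ω else X j ω)) ∂μ := by
  have hJ : AEMeasurable (fun ω k => Sum.elim X X' k ω) μ :=
    aemeasurable_pi_lambda _ (IdentDistrib.aemeasurable_sumElim hid)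
  have hlaw := hindep.map_sumElim_eq_pi hid
  have : ∀ i, IsProbabilityMeasure (μ.map (X i)) :=
    fun i => Measure.isProbabilityMeasure_map (hid i).aemeasurable_fst
  have hL2' : MemLp (fun x => f (resample ∅ x)) 2 (μ.map fun ω k => Sum.elim X X' k ω) := by
    rwa [memLp_map_measure_iff (Measurable.aestronglyMeasurable (by fun_prop)) hJ]
  rw [hlaw] at hL2'
  calc variance (fun ω => f (fun i => X i ω)) μ
      = variance (fun x => f (resample ∅ x)) (Measure.pi (Sum.elim _ _)) := by
        rw [← hlaw, variance_map (Measurable.aemeasurable (by fun_prop)) hJ]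
        rfl
    _ = _ := variance_eq_half_sum_integral_resample _ hL2'
    _ = _ := by
        congr 1
        refine sum_congr rfl fun i _ => ?_
        rw [← hlaw, integral_map hJ (Measurable.aestronglyMeasurable (by fun_prop))]
        congr 1 with ω
        unfold resample
        simp only [mem_singleton, mem_Iio, mem_Iic, notMem_empty, if_false,
          apply_ite (fun k => Sum.elim X X' k ω), Sum.elim_inl, Sum.elim_inr]

/-- Chatterjee's variance formula via resampling. -/
theorem stmt_0 {Ω 𝒳 : Type*} [MeasurableSpace Ω] [MeasurableSpace 𝒳]
    (μ : Measure Ω) [IsProbabilityMeasure μ] (n : ℕ)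
    (X X' : Fin n → Ω → 𝒳)
    (hmeas : ∀ i, Measurable (X i)) (hmeas' : ∀ i, Measurable (X' i))
    (hindep : iIndepFun (Sum.elim X X') μ)
    (hid : ∀ i, IdentDistrib (X i) (X' i) μ μ)
    (f : (Fin n → 𝒳) → ℝ) (hf : Measurable f)
    (hL2 : MemLp (fun ω => f (fun i => X i ω)) 2 μ) :
    variance (fun ω => f (fun i => X i ω)) μ
      = (1 / 2) * ∑ i : Fin n, ∫ ω,
          (f (fun j => X j ω) - f (fun j => if j = i then X' j ω else X j ω)) *
          (f (fun j => if j < i then X' j ω else X j ω) -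
           f (fun j => if j ≤ i then X' j ω else X j ω)) ∂μ :=
  stmt_0_general μ n X X' hindep hid f hf hL2
end

section
/- Let $\mathbf{X},\mathbf{X}'\in\mathbb{R}^{n\times p}$ differ only in the $(i,\alpha)$ entry, with $\lambda_1$ and $\lambda_1'$ the largest eigenvalues of $\mathbf{X}^\top\mathbf{X}$ and $(\mathbf{X}')^\top(\mathbf{X}')$ respectively, and let $\u_1',\v_1'$ be unit top left/right singular vectors of $\mathbf{X}'$. Then $\lambda_1 \ge \lambda_1' - 2\sqrt{\lambda_1'}\,(|\mathbf{X}_{i\alpha}|+|\mathbf{X}'_{i\alpha}|)\,\|\v_1'\|_\infty\|\u_1'\|_\infty - (|\mathbf{X}_{i\alpha}|+|\mathbf{X}'_{i\alpha}|)^2\|\v_1'\|_\infty^2$. -/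
open Matrix

/-- Deterministic eigenvalue stability bound under single-entry resampling. -/
theorem stmt_6 {n p : ℕ} (X X' : Matrix (Fin n) (Fin p) ℝ) (i : Fin n) (α : Fin p)
    (hdiff : ∀ (j : Fin n) (β : Fin p), (j, β) ≠ (i, α) → X j β = X' j β)
    (lam1 lam1' : ℝ)
    (hmax : ∀ w : Fin p → ℝ, w ⬝ᵥ w = 1 → w ⬝ᵥ (X.transpose * X).mulVec w ≤ lam1)
    (heig : ∃ w : Fin p → ℝ, w ⬝ᵥ w = 1 ∧ (X.transpose * X).mulVec w = lam1 • w)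
    (hmax' : ∀ w : Fin p → ℝ, w ⬝ᵥ w = 1 →
      w ⬝ᵥ (X'.transpose * X').mulVec w ≤ lam1')
    (hlam1' : 0 ≤ lam1')
    (u1' : Fin n → ℝ) (v1' : Fin p → ℝ)
    (hu : u1' ⬝ᵥ u1' = 1) (hv : v1' ⬝ᵥ v1' = 1)
    (hXv : X'.mulVec v1' = Real.sqrt lam1' • u1')
    (hXu : X'.transpose.mulVec u1' = Real.sqrt lam1' • v1') :
    lam1' - 2 * Real.sqrt lam1' * (|X i α| + |X' i α|) * ‖v1'‖ * ‖u1'‖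
      - (|X i α| + |X' i α|) ^ 2 * ‖v1'‖ ^ 2 ≤ lam1 := by
  set s := Real.sqrt lam1' with hs
  have hs0 : 0 ≤ s := Real.sqrt_nonneg _
  have hs2 : s ^ 2 = lam1' := Real.sq_sqrt hlam1'
  set δ : ℝ := X i α - X' i α with hδ
  set d : Fin n → ℝ := Pi.single i (δ * v1' α) with hd
  have hmv : X.mulVec v1' = X'.mulVec v1' + d := by
    funext j
    simp only [Pi.add_apply, mulVec, dotProduct, hd]
    by_cases hj : j = i
    · rw [hj, Pi.single_eq_same]
      have hz : ∀ β ∈ Finset.univ, β ≠ α → X i β * v1' β - X' i β * v1' β = 0 := by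
        intro β _ hβ
        rw [hdiff i β (by simp [hβ])]; ring
      have hsum := Finset.sum_eq_single_of_mem α (Finset.mem_univ α) hz
      rw [Finset.sum_sub_distrib] at hsum
      have h3 : ∑ β, X i β * v1' β
          = ∑ β, X' i β * v1' β + (X i α * v1' α - X' i α * v1' α) := by
        linarith
      rw [h3, hδ]; ring
    · rw [Pi.single_eq_of_ne hj, add_zero]
      apply Finset.sum_congr rfl
      intro β _
      rw [hdiff j β (by simp [hj])]
  have key : v1' ⬝ᵥ (X.transpose * X).mulVec v1'
      = (X.mulVec v1') ⬝ᵥ (X.mulVec v1') := by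
    rw [← mulVec_mulVec, dotProduct_mulVec, vecMul_transpose]
  have h1 := hmax v1' hv
  rw [key, hmv] at h1
  have expand : (X'.mulVec v1' + d) ⬝ᵥ (X'.mulVec v1' + d)
      = lam1' + 2 * (s * (δ * v1' α) * u1' i) + (δ * v1' α) ^ 2 := by
    rw [add_dotProduct, dotProduct_add, dotProduct_add, hXv, hd,
      smul_dotProduct, dotProduct_smul, smul_eq_mul, smul_eq_mul, hu,
      dotProduct_single, single_dotProduct, single_dotProduct,
      Pi.smul_apply, smul_eq_mul, Pi.single_eq_same]
    ring_nf
    rw [hs2]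
    ring
  rw [expand] at h1
  have hva : |v1' α| ≤ ‖v1'‖ := by
    simpa [Real.norm_eq_abs] using norm_le_pi_norm v1' α
  have hui : |u1' i| ≤ ‖u1'‖ := by
    simpa [Real.norm_eq_abs] using norm_le_pi_norm u1' i
  have hδb : |δ| ≤ |X i α| + |X' i α| := abs_sub _ _
  have hv0 : 0 ≤ ‖v1'‖ := norm_nonneg _
  have hu0 : 0 ≤ ‖u1'‖ := norm_nonneg _
  have habs1 : |δ * v1' α| ≤ (|X i α| + |X' i α|) * ‖v1'‖ := by
    rw [abs_mul]
    exact mul_le_mul hδb hva (abs_nonneg _) (by positivity)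
  have habs2 : |δ * v1' α * u1' i| ≤ (|X i α| + |X' i α|) * ‖v1'‖ * ‖u1'‖ := by
    rw [abs_mul]
    exact mul_le_mul habs1 hui (abs_nonneg _) (by positivity)
  have h2 := abs_le.mp habs2
  nlinarith [sq_nonneg (δ * v1' α), abs_nonneg (δ * v1' α),
    mul_le_mul_of_nonneg_left h2.1 hs0, sq_abs (δ * v1' α),
    sq_nonneg ((|X i α| + |X' i α|) * ‖v1'‖ - |δ * v1' α|)]
end

section
/- Let $\v,\v'\in\mathbb{R}^p$ be unit vectors with $\max_{\alpha,\beta}|\v(\alpha)\v(\beta)-\v'(\alpha)\v'(\beta)|\le\epsilon$ and $\|\v'\|_\infty\le M$. Suppose there exists $\alpha_0$ with $\v(\alpha_0)\ge p^{-1/2}$ and $\v'(\alpha_0)\ge 0$. Then $|\v(\alpha_0)-\v'(\alpha_0)|\le \epsilon\sqrt{p}$, and for every $\beta$: $|\v(\beta)-\v'(\beta)| \le \epsilon\sqrt{p} + M\,\epsilon\, p$. -/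
open Matrix

/-- Entrywise closeness of rank-one projectors implies entrywise closeness of
the sign-aligned unit vectors. The Pi norm on `Fin p → ℝ` is the sup norm. -/
theorem stmt_18 {p : ℕ} (v v' : Fin p → ℝ) (hv : v ⬝ᵥ v = 1) (hv' : v' ⬝ᵥ v' = 1)
    (ε M : ℝ)
    (hclose : ∀ α β, |v α * v β - v' α * v' β| ≤ ε)
    (hM : ‖v'‖ ≤ M)
    (α0 : Fin p) (hα0 : 1 / Real.sqrt p ≤ v α0) (hα0' : 0 ≤ v' α0) :
    |v α0 - v' α0| ≤ ε * Real.sqrt p ∧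
      ∀ β, |v β - v' β| ≤ ε * Real.sqrt p + M * ε * p := by
  have hp : 0 < p := α0.pos
  set sp := Real.sqrt p with hsp
  have hsp0 : 0 < sp := Real.sqrt_pos.mpr (by positivity)
  have hspsq : sp * sp = p := Real.mul_self_sqrt (by positivity)
  set a := v α0
  set b := v' α0
  have ha : 0 < a := lt_of_lt_of_le (by positivity) hα0
  have hasp : 1 ≤ a * sp := by
    rw [div_le_iff₀ hsp0] at hα0; linarith
  have hε : 0 ≤ ε := le_trans (abs_nonneg _) (hclose α0 α0)
  have hM0 : 0 ≤ M := le_trans (norm_nonneg _) hM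
  have hab : |a * a - b * b| ≤ ε := hclose α0 α0
  have h1 : |a - b| ≤ ε * sp := by
    rcases abs_cases (a * a - b * b) with ⟨h, _⟩ | ⟨h, _⟩ <;>
    rcases abs_cases (a - b) with ⟨h2, _⟩ | ⟨h2, _⟩ <;>
    rw [h2] <;> rw [h] at hab <;> nlinarith [mul_pos ha hsp0, sq_nonneg (a - b), sq_nonneg (a + b)]
  refine ⟨h1, fun β => ?_⟩
  set x := v β
  set y := v' β
  have hy : |y| ≤ M := le_trans (norm_le_pi_norm v' β) hM
  have hcl : |a * x - b * y| ≤ ε := hclose α0 β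
  have key : a * |x - y| ≤ ε + M * (ε * sp) := by
    have h3 : a * |x - y| = |(a * x - b * y) + y * (b - a)| := by
      rw [show (a * x - b * y) + y * (b - a) = a * (x - y) by ring, abs_mul, abs_of_pos ha]
    rw [h3]
    calc |(a * x - b * y) + y * (b - a)| ≤ |a * x - b * y| + |y * (b - a)| := abs_add_le _ _
      _ ≤ ε + M * (ε * sp) := by
          have h1' : |b - a| ≤ ε * sp := (abs_sub_comm a b) ▸ h1
          rw [abs_mul]
          exact add_le_add hcl (mul_le_mul hy h1' (abs_nonneg _) hM0)
  calc |x - y| = 1 * |x - y| := (one_mul _).symm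
    _ ≤ (a * sp) * |x - y| := mul_le_mul_of_nonneg_right hasp (abs_nonneg _)
    _ = sp * (a * |x - y|) := by ring
    _ ≤ sp * (ε + M * (ε * sp)) := mul_le_mul_of_nonneg_left key (le_of_lt hsp0)
    _ = ε * sp + M * ε * (sp * sp) := by ring
    _ = ε * sp + M * ε * p := by rw [hspsq]
end
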